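/- arXiv:2406.03392 — 5 statements merged into one kernel-verified Lean document; each statement's English description precedes it below -/
import Mathlib

section
/- Let Ω ⊂ ℝⁿ be an open set of finite measure and p : Ω → [1,∞] measurable. Fix α > 0 and suppose there is C > 1 such that for all sufficiently large λ, |{x ∈ Ω : p(x) ≥ λ}| ≤ C^λ λ^{-λ/α} (ln λ)^{-λ/α}. Then the exponential Orlicz space exp(L^α)(Ω) embeds continuously into L^{p(·)}(Ω). -/
/-!
Fix `t > 0` with `∫_Ω exp ((|f|/t)^α) ≤ 1` and write `u = |f|/t`, `q = p x`; it suffices to bound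
the `L^{p(·)}` modular of `u / K` by `1` for a `K` independent of `f`. Pointwise,
`(u/K)^q ≤ ½ e^{u^α}` when `q < k₀`, while for `q ≥ k₀` the Young-type inequality
`(u/K)^q ≤ (q log q / B)^{q/α} + ½ e^{u^α}` holds: where `u^α ≤ q log q / B` the first term
dominates, and beyond that `q log u` is small compared with `(K u)^α`. The exponential terms
integrate to at most `½`. The remaining term involves `p` only: on the layer `k ≤ p < k + 1` it is
at most its value at `k + 1`, and against `|{p ≥ k}| ≤ C^k (k log k)^{-k/α}` the choice
`B = 4 (4C)^α` leaves `(k log k)^{1/α} 4^{-k-1} ≤ 2^{-k}/4`, a geometric series of sum `≤ ½`.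
The same bound shows that `{p = ∞}` is null, so the `L^∞` part of the modular vanishes.
-/

open MeasureTheory Real Set Filter
open scoped ENNReal

/-- Luxemburg norm of the variable Lebesgue space `L^{p(·)}(Ω)` for an exponent
`p : E → [1,∞]`, with the modular `∫_{Ω∗}(|f|/t)^{p} + t⁻¹‖f‖_{L^∞(Ω_∞)}`. -/
noncomputable def luxNormE {E : Type*} [MeasureSpace E] (Ω : Set E) (p : E → ℝ≥0∞)
    (f : E → ℝ) : ℝ≥0∞ :=
  ⨅ (t : ℝ) (_ : 0 < t)
    (_ : (∫⁻ x in Ω ∩ {x | p x ≠ ∞}, ENNReal.ofReal ((|f x| / t) ^ (p x).toReal)) +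
          essSup (fun x => ENNReal.ofReal (|f x| / t)) (volume.restrict (Ω ∩ {x | p x = ∞}))
          ≤ 1),
    ENNReal.ofReal t

/-- Luxemburg norm of the Orlicz space with Young function `M`. -/
noncomputable def orliczNorm {E : Type*} [MeasureSpace E] (Ω : Set E) (M : ℝ → ℝ) (f : E → ℝ) :
    ℝ≥0∞ :=
  ⨅ (t : ℝ) (_ : 0 < t)
    (_ : ∫⁻ x in Ω, ENNReal.ofReal (M (|f x| / t)) ≤ 1),
    ENNReal.ofReal t

open scoped Topology

/-- Bounds `u ^ q` where `u ^ α ≤ q log q / B`; for larger `u` it is dominated by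
`exp ((K u) ^ α) / 2`. -/
noncomputable def youngTerm (α B q : ℝ) : ℝ := (q * log q / B) ^ (q / α)

lemma measurable_youngTerm (α B : ℝ) : Measurable (youngTerm α B) :=
  ((measurable_id.mul measurable_log).div_const B).pow (measurable_id.div_const α)

lemma one_le_youngTerm {α B q : ℝ} (hα : 0 < α) (hB : 0 < B) (hq : 0 ≤ q)
    (hBq : B ≤ q * log q) : 1 ≤ youngTerm α B q :=
  one_le_rpow ((one_le_div hB).2 hBq) (div_nonneg hq hα.le)

lemma youngTerm_le_youngTerm {α B q r : ℝ} (hα : 0 < α) (hB : 0 < B) (hq : 1 ≤ q)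
    (hBq : B ≤ q * log q) (hqr : q ≤ r) : youngTerm α B q ≤ youngTerm α B r := by
  have hbase : 1 ≤ q * log q / B := (one_le_div hB).2 hBq
  calc youngTerm α B q ≤ (q * log q / B) ^ (r / α) :=
        rpow_le_rpow_of_exponent_le hbase (by gcongr)
    _ ≤ youngTerm α B r := by
        have : log q ≤ log r := log_le_log (by linarith) hqr
        refine rpow_le_rpow (by linarith) ?_ (div_nonneg (by linarith) hα.le)
        exact div_le_div_of_nonneg_right (mul_le_mul hqr this (log_nonneg hq) (by linarith)) hB.le

lemma rpow_le_exp_mul_exp_rpow {α c v : ℝ} (hα : 0 < α) (hc : 0 ≤ c) (hv : 0 ≤ v) :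
    v ^ c ≤ exp (c ^ 2 / α ^ 2) * exp (v ^ α) := by
  rcases hv.eq_or_lt with rfl | hv
  · calc (0 : ℝ) ^ c ≤ 1 := zero_rpow_le_one c
      _ ≤ exp (c ^ 2 / α ^ 2) * exp (0 ^ α) :=
        one_le_mul_of_one_le_of_one_le (one_le_exp (by positivity)) (one_le_exp (by positivity))
  set s := v ^ (α / 2)
  have hs : 0 < s := rpow_pos_of_pos hv _
  have hs_sq : s ^ 2 = v ^ α := by rw [← rpow_natCast, ← rpow_mul hv.le]; norm_num
  -- `α log v = 2 log s < 2 s`, and then AM-GM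
  have hlog : α * log v ≤ 2 * s := by
    have := log_le_sub_one_of_pos hs
    rw [log_rpow hv] at this
    linarith
  have key : log v * c ≤ c ^ 2 / α ^ 2 + v ^ α := by
    have hlog' : log v ≤ 2 * s / α := by rw [le_div_iff₀ hα]; linarith
    calc log v * c ≤ 2 * s / α * c := mul_le_mul_of_nonneg_right hlog' hc
      _ = 2 * (c / α) * s := by ring
      _ ≤ (c / α) ^ 2 + s ^ 2 := by nlinarith [sq_nonneg (c / α - s)]
      _ = c ^ 2 / α ^ 2 + v ^ α := by rw [div_pow, hs_sq]
  calc v ^ c = exp (log v * c) := rpow_def_of_pos hv c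
    _ ≤ exp (c ^ 2 / α ^ 2 + v ^ α) := exp_le_exp.2 key
    _ = exp (c ^ 2 / α ^ 2) * exp (v ^ α) := exp_add _ _

lemma div_rpow_le_exp_div_mul_exp {α K q w : ℝ} (hα : 0 < α) (hK : 1 ≤ K) (hq : 1 ≤ q)
    (hw : 0 ≤ w) : (w / K) ^ q ≤ exp (q ^ 2 / α ^ 2) / K * exp (w ^ α) := by
  have hK0 : 0 < K := one_pos.trans_le hK
  calc (w / K) ^ q = w ^ q / K ^ q := div_rpow hw hK0.le q
    _ ≤ w ^ q / K := div_le_div_of_nonneg_left (by positivity) hK0 (self_le_rpow_of_one_le hK hq)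
    _ ≤ exp (q ^ 2 / α ^ 2) * exp (w ^ α) / K := by
      gcongr; exact rpow_le_exp_mul_exp_rpow hα (by linarith) hw
    _ = exp (q ^ 2 / α ^ 2) / K * exp (w ^ α) := by ring

lemma rpow_le_half_exp_of_mul_log_le {α B K q u : ℝ} (hα : 0 < α) (hK : 0 ≤ K)
    (hu : 0 < u) (hlogq : 1 ≤ log q) (hαq : α ≤ q * log q) (hqu : q * log q ≤ B * u ^ α)
    (hKα : 1 + B * (2 + |log α|) / α ≤ K ^ α) :
    u ^ q ≤ 1 / 2 * exp ((K * u) ^ α) := by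
  have hq : 0 < q := (mul_pos_iff_of_pos_right (by linarith)).1 (hα.trans_le hαq)
  set w := u ^ α
  have hw : 0 < w := rpow_pos_of_pos hu α
  have hlogw : log w ≤ α * w / q + log (q / α) := by
    have h := log_le_sub_one_of_pos (show 0 < w / (q / α) by positivity)
    rw [log_div hw.ne' (by positivity)] at h
    rw [show α * w / q = w / (q / α) by field_simp]
    linarith
  have hlogqα : log (q / α) ≤ log q * (1 + |log α|) := by
    rw [log_div hq.ne' hα.ne']
    nlinarith [neg_le_abs (log α), abs_nonneg (log α)]
  have hlog2 : log 2 ≤ q / α * log q := by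
    rw [div_mul_eq_mul_div, le_div_iff₀ hα]
    nlinarith [log_two_lt_d9]
  have hexponent : q * log u + log 2 ≤ K ^ α * w := by
    calc q * log u + log 2 = q / α * log w + log 2 := by rw [log_rpow hu]; field_simp
      _ ≤ q / α * (α * w / q + log q * (1 + |log α|)) + q / α * log q := by gcongr; linarith
      _ = w + q * log q * (2 + |log α|) / α := by field_simp; ring
      _ ≤ w + B * w * (2 + |log α|) / α := by gcongr
      _ = w * (1 + B * (2 + |log α|) / α) := by ring
      _ ≤ K ^ α * w := by rw [mul_comm]; gcongr
  calc u ^ q = exp (q * log u) := by rw [rpow_def_of_pos hu, mul_comm]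
    _ ≤ exp (K ^ α * w - log 2) := exp_le_exp.2 (by linarith)
    _ = 1 / 2 * exp ((K * u) ^ α) := by
        rw [exp_sub, exp_log two_pos, mul_rpow hK hu.le]; ring

lemma rpow_le_youngTerm_add_half_exp {α B K q u : ℝ} (hα : 0 < α) (hB : 0 < B) (hK : 0 ≤ K)
    (hu : 0 ≤ u) (hlogq : 1 ≤ log q) (hαq : α ≤ q * log q) (hBq : B ≤ q * log q)
    (hKα : 1 + B * (2 + |log α|) / α ≤ K ^ α) :
    u ^ q ≤ youngTerm α B q + 1 / 2 * exp ((K * u) ^ α) := by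
  have hq : 0 < q := (mul_pos_iff_of_pos_right (by linarith)).1 (hα.trans_le hαq)
  have hY : 0 ≤ youngTerm α B q := rpow_nonneg (by positivity) _
  have hE : 0 ≤ 1 / 2 * exp ((K * u) ^ α) := by positivity
  rcases le_or_gt (u ^ α) (q * log q / B) with hsmall | hlarge
  · have hu_le : u ≤ (q * log q / B) ^ α⁻¹ := by
      simpa [← rpow_mul hu, mul_inv_cancel₀ hα.ne'] using
        rpow_le_rpow (rpow_nonneg hu α) hsmall (inv_nonneg.2 hα.le)
    calc u ^ q ≤ ((q * log q / B) ^ α⁻¹) ^ q := rpow_le_rpow hu hu_le hq.le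
      _ = youngTerm α B q := by rw [youngTerm, ← rpow_mul (by positivity)]; ring_nf
      _ ≤ _ := le_add_of_nonneg_right hE
  · have hu0 : 0 < u := hu.lt_of_ne <| by
      rintro rfl
      rw [zero_rpow hα.ne'] at hlarge
      linarith [(one_le_div hB).2 hBq]
    have hqu : q * log q ≤ B * u ^ α := by rw [div_lt_iff₀ hB] at hlarge; linarith
    exact (rpow_le_half_exp_of_mul_log_le hα hK hu0 hlogq hαq hqu hKα).trans
      (le_add_of_nonneg_left hY)

noncomputable def distBound (α C l : ℝ) : ℝ := C ^ l * l ^ (-(l / α)) * log l ^ (-(l / α))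

lemma add_one_mul_log_add_one_le {l : ℝ} (hl : 2 ≤ l) :
    (l + 1) * log (l + 1) ≤ 4 * (l * log l) := by
  have hlog : log (l + 1) ≤ 2 * log l := by
    rw [← log_rpow (by linarith), rpow_two]
    exact log_le_log (by linarith) (by nlinarith)
  have : 0 ≤ log (l + 1) := log_nonneg (by linarith)
  nlinarith

lemma youngTerm_add_one_mul_distBound_le {α C l : ℝ} (hα : 0 < α) (hC : 1 ≤ C) (hl : 2 ≤ l)
    (hP : (l * log l) ^ α⁻¹ ≤ 2 ^ l) :
    youngTerm α (4 * (4 * C) ^ α) (l + 1) * distBound α C l ≤ 2 ^ (-l) / 4 := by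
  set P := l * log l
  have hl0 : 0 < l := by linarith
  have hlogl : 0 < log l := log_pos (by linarith)
  have hP0 : 0 < P := mul_pos hl0 hlogl
  have h4C : 0 < 4 * C := by linarith
  have hY : youngTerm α (4 * (4 * C) ^ α) (l + 1) ≤ P ^ ((l + 1) / α) / (4 * C) ^ (l + 1) := by
    have hbase : (l + 1) * log (l + 1) / (4 * (4 * C) ^ α) ≤ P / (4 * C) ^ α := by
      rw [div_le_div_iff₀ (by positivity) (by positivity)]
      nlinarith [add_one_mul_log_add_one_le hl, rpow_pos_of_pos h4C α]
    calc youngTerm α (4 * (4 * C) ^ α) (l + 1)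
        ≤ (P / (4 * C) ^ α) ^ ((l + 1) / α) :=
          rpow_le_rpow (div_nonneg (mul_nonneg (by linarith) (log_nonneg (by linarith)))
            (by positivity)) hbase (by positivity)
      _ = P ^ ((l + 1) / α) / (4 * C) ^ (l + 1) := by
          rw [div_rpow hP0.le (by positivity), ← rpow_mul h4C.le, mul_div_cancel₀ _ hα.ne']
  have hD : distBound α C l = C ^ l * P ^ (-(l / α)) := by
    rw [distBound, mul_rpow hl0.le hlogl.le]; ring
  have hPP : P ^ ((l + 1) / α) * P ^ (-(l / α)) = P ^ α⁻¹ := by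
    rw [← rpow_add hP0]; congr 1; ring
  have h4Cl : (4 * C) ^ (l + 1) = 4 * 2 ^ l * 2 ^ l * C * C ^ l := by
    rw [rpow_add_one h4C.ne', mul_rpow (by norm_num) (by linarith),
      show (4 : ℝ) = 2 * 2 by norm_num, mul_rpow (by norm_num) (by norm_num)]
    ring
  calc youngTerm α (4 * (4 * C) ^ α) (l + 1) * distBound α C l
      ≤ P ^ ((l + 1) / α) / (4 * C) ^ (l + 1) * (C ^ l * P ^ (-(l / α))) := by
        rw [hD]; gcongr
    _ = P ^ α⁻¹ / (4 * 2 ^ l * 2 ^ l * C) := by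
        rw [← hPP, h4Cl]; field_simp
    _ ≤ 2 ^ l / (4 * 2 ^ l * 2 ^ l * 1) := by gcongr
    _ = 2 ^ (-l) / 4 := by rw [rpow_neg (by norm_num)]; field_simp

lemma eventually_large_exponent {α : ℝ} (hα : 0 < α) (lam0 B : ℝ) :
    ∀ᶠ l in atTop, (lam0 ≤ l ∧ 2 ≤ l ∧ (l * log l) ^ α⁻¹ ≤ 2 ^ l) ∧
      (B ≤ l * log l ∧ 1 ≤ log l ∧ α ≤ l * log l) := by
  have hP : Tendsto (fun l => l * log l) atTop atTop := tendsto_id.atTop_mul_atTop₀ tendsto_log_atTop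
  have hpow : ∀ᶠ l in atTop, l ^ (2 / α) * exp (-log 2 * l) < 1 :=
    (tendsto_rpow_mul_exp_neg_mul_atTop_nhds_zero _ _ (log_pos one_lt_two)).eventually
      (gt_mem_nhds one_pos)
  filter_upwards [eventually_ge_atTop lam0, eventually_ge_atTop 2, hpow, hP.eventually_ge_atTop B,
    tendsto_log_atTop.eventually_ge_atTop 1, hP.eventually_ge_atTop α]
    with l hlam0 hl hpow hB hlog hα'
  refine ⟨⟨hlam0, hl, ?_⟩, hB, hlog, hα'⟩
  have hl0 : 0 ≤ l := by linarith
  rw [neg_mul, exp_neg, ← div_eq_mul_inv, div_lt_one (exp_pos _), ← rpow_def_of_pos two_pos]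
    at hpow
  calc (l * log l) ^ α⁻¹ ≤ (l ^ (2 : ℝ)) ^ α⁻¹ := by
        apply rpow_le_rpow (mul_nonneg hl0 (by linarith)) _ (inv_nonneg.2 hα.le)
        rw [rpow_two, sq]; exact mul_le_mul_of_nonneg_left (log_le_self hl0) hl0
    _ = l ^ (2 / α) := by rw [← rpow_mul hl0, div_eq_mul_inv]
    _ ≤ 2 ^ l := hpow.le

lemma div_rpow_le_indicator_youngTerm_add {α B K k0 q w : ℝ} (hα : 0 < α) (hB : 0 < B)
    (hKexp : 2 * exp (k0 ^ 2 / α ^ 2) ≤ K) (hKα : 1 + B * (2 + |log α|) / α ≤ K ^ α)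
    (hlarge : ∀ l ≥ k0, B ≤ l * log l ∧ 1 ≤ log l ∧ α ≤ l * log l) (hq : 1 ≤ q) (hw : 0 ≤ w) :
    (w / K) ^ q ≤ (Ici k0).indicator (youngTerm α B) q + 1 / 2 * exp (w ^ α) := by
  have hK : 2 ≤ K := le_trans (by linarith [one_le_exp (by positivity : 0 ≤ k0 ^ 2 / α ^ 2)]) hKexp
  by_cases hqk : k0 ≤ q
  · obtain ⟨hBq, hlog, hαq⟩ := hlarge q hqk
    simpa [indicator_of_mem (mem_Ici.2 hqk), mul_div_cancel₀ w (by positivity : K ≠ 0)] using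
      rpow_le_youngTerm_add_half_exp (K := K) (u := w / K) hα hB (by linarith)
        (div_nonneg hw (by linarith)) hlog hαq hBq hKα
  · rw [indicator_of_notMem (by simpa using hqk), zero_add]
    calc (w / K) ^ q ≤ exp (q ^ 2 / α ^ 2) / K * exp (w ^ α) :=
          div_rpow_le_exp_div_mul_exp hα (by linarith) hq hw
      _ ≤ 1 / 2 * exp (w ^ α) := by
          refine mul_le_mul_of_nonneg_right ?_ (exp_pos _).le
          rw [div_le_iff₀ (by positivity)]
          have : q ^ 2 ≤ k0 ^ 2 := by nlinarith
          have : exp (q ^ 2 / α ^ 2) ≤ exp (k0 ^ 2 / α ^ 2) := by gcongr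
          linarith

section Tail

variable {E : Type*} [MeasurableSpace E] {μ : Measure E} {Ω : Set E} {p : E → ℝ≥0∞}
  {α C lam0 k0 : ℝ}

lemma ofReal_youngTerm_mul_measure_le (hα : 0 < α) (hC : 1 ≤ C)
    (hdist : ∀ l ≥ lam0, μ {x ∈ Ω | ENNReal.ofReal l ≤ p x} ≤ ENNReal.ofReal (distBound α C l))
    (hlarge : ∀ l ≥ k0, lam0 ≤ l ∧ 2 ≤ l ∧ (l * log l) ^ α⁻¹ ≤ 2 ^ l) (m : ℕ) :
    ENNReal.ofReal (youngTerm α (4 * (4 * C) ^ α) (k0 + m + 1)) *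
      μ {x ∈ Ω | ENNReal.ofReal (k0 + m) ≤ p x} ≤ 4⁻¹ * 2⁻¹ ^ m := by
  obtain ⟨hlam0, hl, hP⟩ := hlarge (k0 + m) (by simp)
  have hk0 : 0 ≤ k0 := by linarith [(hlarge k0 le_rfl).2.1]
  have hY : 0 ≤ youngTerm α (4 * (4 * C) ^ α) (k0 + m + 1) :=
    rpow_nonneg (div_nonneg (mul_nonneg (by linarith) (log_nonneg (by linarith)))
      (by positivity)) _
  calc ENNReal.ofReal (youngTerm α (4 * (4 * C) ^ α) (k0 + m + 1)) *
        μ {x ∈ Ω | ENNReal.ofReal (k0 + m) ≤ p x}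
      ≤ ENNReal.ofReal (youngTerm α (4 * (4 * C) ^ α) (k0 + m + 1)) *
          ENNReal.ofReal (distBound α C (k0 + m)) := by gcongr; exact hdist _ hlam0
    _ ≤ ENNReal.ofReal (2 ^ (-(k0 + m)) / 4) := by
        rw [← ENNReal.ofReal_mul hY]
        exact ENNReal.ofReal_le_ofReal (youngTerm_add_one_mul_distBound_le hα hC hl hP)
    _ ≤ ENNReal.ofReal (2⁻¹ ^ m / 4) := by
        gcongr
        rw [inv_pow, ← rpow_natCast, ← rpow_neg (by norm_num)]
        exact rpow_le_rpow_of_exponent_le (by norm_num) (by linarith)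
    _ = 4⁻¹ * 2⁻¹ ^ m := by
        rw [ENNReal.ofReal_div_of_pos (by norm_num), ENNReal.ofReal_pow (by norm_num),
          ENNReal.ofReal_inv_of_pos (by norm_num)]
        simp [div_eq_mul_inv, mul_comm]

lemma measure_inter_eq_top_eq_zero (hα : 0 < α) (hC : 1 ≤ C)
    (hdist : ∀ l ≥ lam0, μ {x ∈ Ω | ENNReal.ofReal l ≤ p x} ≤ ENNReal.ofReal (distBound α C l))
    (hlarge : ∀ l ≥ k0, lam0 ≤ l ∧ 2 ≤ l ∧ (l * log l) ^ α⁻¹ ≤ 2 ^ l)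
    (hB : ∀ l ≥ k0, 4 * (4 * C) ^ α ≤ l * log l) :
    μ (Ω ∩ {x | p x = ∞}) = 0 := by
  have hbound (m : ℕ) : μ (Ω ∩ {x | p x = ∞}) ≤ 4⁻¹ * 2⁻¹ ^ m := by
    have hl : k0 ≤ k0 + m + 1 := by linarith [m.cast_nonneg (α := ℝ)]
    calc μ (Ω ∩ {x | p x = ∞}) ≤ μ {x ∈ Ω | ENNReal.ofReal (k0 + m) ≤ p x} :=
          measure_mono fun x ⟨hx, hpx⟩ => ⟨hx, by rw [show p x = ∞ from hpx]; exact le_top⟩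
      _ ≤ ENNReal.ofReal (youngTerm α (4 * (4 * C) ^ α) (k0 + m + 1)) *
            μ {x ∈ Ω | ENNReal.ofReal (k0 + m) ≤ p x} :=
          le_mul_of_one_le_left' (ENNReal.one_le_ofReal.2 (one_le_youngTerm hα
            (by positivity) (by linarith [(hlarge _ hl).2.1]) (hB _ hl)))
      _ ≤ 4⁻¹ * 2⁻¹ ^ m := ofReal_youngTerm_mul_measure_le hα hC hdist hlarge m
  have hlim : Tendsto (fun m : ℕ => (4 : ℝ≥0∞)⁻¹ * 2⁻¹ ^ m) atTop (𝓝 0) := by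
    simpa using ENNReal.Tendsto.const_mul
      (ENNReal.tendsto_pow_atTop_nhds_zero_of_lt_one (ENNReal.inv_lt_one.2 ENNReal.one_lt_two))
      (Or.inr (by simp))
  exact le_antisymm (ge_of_tendsto' hlim hbound) bot_le

lemma setLIntegral_layer_youngTerm_le (hα : 0 < α) (hC : 1 ≤ C)
    (hdist : ∀ l ≥ lam0, μ {x ∈ Ω | ENNReal.ofReal l ≤ p x} ≤ ENNReal.ofReal (distBound α C l))
    (hlarge : ∀ l ≥ k0, lam0 ≤ l ∧ 2 ≤ l ∧ (l * log l) ^ α⁻¹ ≤ 2 ^ l)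
    (hB : ∀ l ≥ k0, 4 * (4 * C) ^ α ≤ l * log l) (m : ℕ) :
    ∫⁻ x in {x ∈ Ω | k0 + m ≤ (p x).toReal ∧ (p x).toReal < k0 + m + 1},
      ENNReal.ofReal (youngTerm α (4 * (4 * C) ^ α) (p x).toReal) ∂μ ≤ 4⁻¹ * 2⁻¹ ^ m := by
  set B := 4 * (4 * C) ^ α
  set S := {x ∈ Ω | k0 + m ≤ (p x).toReal ∧ (p x).toReal < k0 + m + 1}
  have hk : k0 ≤ k0 + m := by simp
  calc ∫⁻ x in S, ENNReal.ofReal (youngTerm α B (p x).toReal) ∂μ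
      ≤ ∫⁻ _ in S, ENNReal.ofReal (youngTerm α B (k0 + m + 1)) ∂μ := by
        refine setLIntegral_mono measurable_const fun x ⟨_, hx, hx'⟩ => ?_
        have hq : k0 ≤ (p x).toReal := hk.trans hx
        exact ENNReal.ofReal_le_ofReal (youngTerm_le_youngTerm hα (by positivity)
          (by linarith [(hlarge _ hq).2.1]) (hB _ hq) hx'.le)
    _ = ENNReal.ofReal (youngTerm α B (k0 + m + 1)) * μ S := setLIntegral_const _ _
    _ ≤ ENNReal.ofReal (youngTerm α B (k0 + m + 1)) *
          μ {x ∈ Ω | ENNReal.ofReal (k0 + m) ≤ p x} := by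
        gcongr
        exact fun x ⟨hx, h, _⟩ => ⟨hx, ENNReal.ofReal_le_of_le_toReal h⟩
    _ ≤ 4⁻¹ * 2⁻¹ ^ m := ofReal_youngTerm_mul_measure_le hα hC hdist hlarge m

lemma lintegral_indicator_youngTerm_le (hpmeas : Measurable p) (hα : 0 < α) (hC : 1 ≤ C)
    (hdist : ∀ l ≥ lam0, μ {x ∈ Ω | ENNReal.ofReal l ≤ p x} ≤ ENNReal.ofReal (distBound α C l))
    (hlarge : ∀ l ≥ k0, lam0 ≤ l ∧ 2 ≤ l ∧ (l * log l) ^ α⁻¹ ≤ 2 ^ l)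
    (hB : ∀ l ≥ k0, 4 * (4 * C) ^ α ≤ l * log l) :
    ∫⁻ x in Ω ∩ {x | p x ≠ ∞},
      ENNReal.ofReal ((Ici k0).indicator (youngTerm α (4 * (4 * C) ^ α)) (p x).toReal) ∂μ
      ≤ 2⁻¹ := by
  set B := 4 * (4 * C) ^ α
  set T := {x | k0 ≤ (p x).toReal}
  have hT : MeasurableSet T := measurableSet_le measurable_const hpmeas.ennreal_toReal
  set S : ℕ → Set E := fun m => {x ∈ Ω | k0 + m ≤ (p x).toReal ∧ (p x).toReal < k0 + m + 1}
  have hcover : T ∩ (Ω ∩ {x | p x ≠ ∞}) ⊆ ⋃ m, S m := by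
    rintro x ⟨hxT, hxΩ, -⟩
    have h0 : 0 ≤ (p x).toReal - k0 := sub_nonneg.2 hxT
    refine mem_iUnion.2 ⟨⌊(p x).toReal - k0⌋₊, hxΩ, ?_, ?_⟩
    · linarith [Nat.floor_le h0]
    · linarith [Nat.lt_floor_add_one ((p x).toReal - k0)]
  have hind : (fun x => ENNReal.ofReal ((Ici k0).indicator (youngTerm α B) (p x).toReal))
      = T.indicator fun x => ENNReal.ofReal (youngTerm α B (p x).toReal) := by
    ext x
    by_cases hx : k0 ≤ (p x).toReal <;> simp [T, indicator, hx]
  calc ∫⁻ x in Ω ∩ {x | p x ≠ ∞},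
        ENNReal.ofReal ((Ici k0).indicator (youngTerm α B) (p x).toReal) ∂μ
      = ∫⁻ x in T ∩ (Ω ∩ {x | p x ≠ ∞}), ENNReal.ofReal (youngTerm α B (p x).toReal) ∂μ := by
        rw [hind, lintegral_indicator hT, Measure.restrict_restrict hT]
    _ ≤ ∫⁻ x in ⋃ m, S m, ENNReal.ofReal (youngTerm α B (p x).toReal) ∂μ :=
        lintegral_mono_set hcover
    _ ≤ ∑' m, ∫⁻ x in S m, ENNReal.ofReal (youngTerm α B (p x).toReal) ∂μ :=
        lintegral_iUnion_le _ _
    _ ≤ ∑' m : ℕ, 4⁻¹ * 2⁻¹ ^ m :=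
        ENNReal.tsum_le_tsum (setLIntegral_layer_youngTerm_le hα hC hdist hlarge hB)
    _ = 2⁻¹ := by
        rw [ENNReal.tsum_mul_left, ENNReal.tsum_geometric, ENNReal.one_sub_inv_two, inv_inv,
          show (4 : ℝ≥0∞) = 2 * 2 by norm_num, ENNReal.mul_inv (by simp) (by simp), mul_assoc,
          ENNReal.inv_mul_cancel (by simp) (by simp), mul_one]

end Tail

section Norms

variable {E : Type*} [MeasureSpace E] {Ω : Set E} {p : E → ℝ≥0∞} {f : E → ℝ}

lemma luxNormE_le_ofReal {s : ℝ} {g h : E → ℝ} (hs : 0 < s) (hg : Measurable g)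
    (hh : Measurable h) (hnull : volume (Ω ∩ {x | p x = ∞}) = 0)
    (hle : ∀ x ∈ Ω ∩ {x | p x ≠ ∞}, (|f x| / s) ^ (p x).toReal ≤ g x + 1 / 2 * h x)
    (hg_int : ∫⁻ x in Ω ∩ {x | p x ≠ ∞}, ENNReal.ofReal (g x) ≤ 2⁻¹)
    (hh_int : ∫⁻ x in Ω, ENNReal.ofReal (h x) ≤ 1) :
    luxNormE Ω p f ≤ ENNReal.ofReal s := by
  refine iInf_le_of_le s (iInf_le_of_le hs (iInf_le_of_le ?_ le_rfl))
  rw [Measure.restrict_eq_zero.2 hnull, essSup_measure_zero, bot_eq_zero, add_zero]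
  have hhalf : ENNReal.ofReal (1 / 2) = 2⁻¹ := by
    rw [one_div, ENNReal.ofReal_inv_of_pos two_pos, ENNReal.ofReal_ofNat]
  calc ∫⁻ x in Ω ∩ {x | p x ≠ ∞}, ENNReal.ofReal ((|f x| / s) ^ (p x).toReal)
      ≤ ∫⁻ x in Ω ∩ {x | p x ≠ ∞}, (ENNReal.ofReal (g x) + 2⁻¹ * ENNReal.ofReal (h x)) := by
        refine setLIntegral_mono (hg.ennreal_ofReal.add (hh.ennreal_ofReal.const_mul _))
          fun x hx => (ENNReal.ofReal_le_ofReal (hle x hx)).trans ?_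
        rw [← hhalf, ← ENNReal.ofReal_mul (by norm_num)]
        exact ENNReal.ofReal_add_le
    _ = (∫⁻ x in Ω ∩ {x | p x ≠ ∞}, ENNReal.ofReal (g x)) +
          2⁻¹ * ∫⁻ x in Ω ∩ {x | p x ≠ ∞}, ENNReal.ofReal (h x) := by
        rw [lintegral_add_left hg.ennreal_ofReal, lintegral_const_mul _ hh.ennreal_ofReal]
    _ ≤ 2⁻¹ + 2⁻¹ * 1 := by
        gcongr
        exact (lintegral_mono_set inter_subset_left).trans hh_int
    _ = 1 := by rw [mul_one, ENNReal.inv_two_add_inv_two]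

lemma le_ofReal_mul_orliczNorm {M : ℝ → ℝ} {a : ℝ≥0∞} {K : ℝ} (hK : 0 < K)
    (h : ∀ t > 0, ∫⁻ x in Ω, ENNReal.ofReal (M (|f x| / t)) ≤ 1 → a ≤ ENNReal.ofReal (K * t)) :
    a ≤ ENNReal.ofReal K * orliczNorm Ω M f := by
  have hK0 : ENNReal.ofReal K ≠ 0 := by simpa using hK
  calc a = ENNReal.ofReal K * (a / ENNReal.ofReal K) :=
        (ENNReal.mul_div_cancel hK0 ENNReal.ofReal_ne_top).symm
    _ ≤ ENNReal.ofReal K * orliczNorm Ω M f := by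
        gcongr
        refine le_iInf fun t => le_iInf fun ht => le_iInf fun hM => ENNReal.div_le_of_le_mul ?_
        rw [← ENNReal.ofReal_mul ht.le, mul_comm t]
        exact h t ht hM

end Norms

theorem stmt_1_general (n : ℕ) (Ω : Set (Fin n → ℝ))
    (p : (Fin n → ℝ) → ℝ≥0∞) (hpmeas : Measurable p) (hp1 : ∀ x ∈ Ω, 1 ≤ p x)
    (α C : ℝ) (hα : 0 < α) (hC : 1 < C)
    (hdist : ∃ lam0 : ℝ, ∀ l ≥ lam0,
      volume {x ∈ Ω | ENNReal.ofReal l ≤ p x} ≤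
        ENNReal.ofReal (C ^ l * l ^ (-(l/α)) * Real.log l ^ (-(l/α)))) :
    ∃ K > (0:ℝ), ∀ f : (Fin n → ℝ) → ℝ, Measurable f →
      luxNormE Ω p f ≤
        ENNReal.ofReal K * orliczNorm Ω (fun t => Real.exp (t ^ α)) f := by
  obtain ⟨lam0, hlam0⟩ := hdist
  set B := 4 * (4 * C) ^ α
  obtain ⟨k0, hk0⟩ := eventually_atTop.1 (eventually_large_exponent hα lam0 B)
  have hnull := measure_inter_eq_top_eq_zero hα hC.le hlam0 (fun l hl => (hk0 l hl).1)
    (fun l hl => (hk0 l hl).2.1)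
  have htail := lintegral_indicator_youngTerm_le hpmeas hα hC.le hlam0 (fun l hl => (hk0 l hl).1)
    (fun l hl => (hk0 l hl).2.1)
  set K := max (2 * exp (k0 ^ 2 / α ^ 2)) ((1 + B * (2 + |log α|) / α) ^ α⁻¹)
  have hKα : 1 + B * (2 + |log α|) / α ≤ K ^ α := by
    rw [← rpow_inv_rpow (by positivity : 0 ≤ 1 + B * (2 + |log α|) / α) hα.ne']
    exact rpow_le_rpow (by positivity) (le_max_right _ _) hα.le
  have hK : 0 < K := lt_max_of_lt_left (by positivity)
  refine ⟨K, hK, fun f hf => le_ofReal_mul_orliczNorm hK fun t ht hexp => ?_⟩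
  refine luxNormE_le_ofReal (by positivity) ((measurable_youngTerm α B).indicator
    measurableSet_Ici |>.comp hpmeas.ennreal_toReal) (by measurability) hnull ?_ htail hexp
  rintro x ⟨hxΩ, hx⟩
  rw [mul_comm K t, ← div_div]
  exact div_rpow_le_indicator_youngTerm_add hα (by positivity) (le_max_left _ _) hKα
    (fun l hl => (hk0 l hl).2) (by simpa using ENNReal.toReal_mono hx (hp1 x hxΩ))
    (by positivity)

/-- Theorem: if `|{p ≥ λ}| ≤ C^λ λ^{-λ/α} (ln λ)^{-λ/α}` for all large `λ`, then
`exp(L^α)(Ω)` embeds continuously into `L^{p(·)}(Ω)`. -/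
theorem stmt_1 (n : ℕ) (Ω : Set (Fin n → ℝ)) (hΩopen : IsOpen Ω) (hΩfin : volume Ω < ∞)
    (p : (Fin n → ℝ) → ℝ≥0∞) (hpmeas : Measurable p) (hp1 : ∀ x ∈ Ω, 1 ≤ p x)
    (α C : ℝ) (hα : 0 < α) (hC : 1 < C)
    (hdist : ∃ lam0 : ℝ, ∀ l ≥ lam0,
      volume {x ∈ Ω | ENNReal.ofReal l ≤ p x} ≤
        ENNReal.ofReal (C ^ l * l ^ (-(l/α)) * Real.log l ^ (-(l/α)))) :
    ∃ K > (0:ℝ), ∀ f : (Fin n → ℝ) → ℝ, Measurable f →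
      luxNormE Ω p f ≤
        ENNReal.ofReal K * orliczNorm Ω (fun t => Real.exp (t ^ α)) f :=
  stmt_1_general n Ω p hpmeas hp1 α C hα hC hdist
end

section
/- Let α > 0 and θ : [0,∞) → (0,∞) be differentiable with θ(λ) ≤ (ln λ)^α for large λ, and suppose (λ-1)θ'(λ-1)/(α θ(λ-1)) ≤ (1+ln(λ-1))/ln(λ-1) for λ large. Define ψ(λ) = θ(λ)(λ ln λ)^{-α}. Then for all sufficiently large λ, the derivative of λ ↦ ψ(λ-1)^{λ-1} satisfies (ψ(λ-1)^{λ-1})' ≤ -α ψ(λ-1)^{λ-1} ln((λ-1)ln(λ-1)/θ^{1/α}(λ-1)). -/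
/-!
Put `t = λ - 1`. Logarithmic differentiation gives
`(ψ(t)^t)' = ψ(t)^t (ln ψ(t) + t ψ'(t)/ψ(t))`, and
`t ψ'/ψ = t θ'/θ - α (1 + ln t)/ln t`, which the hypothesis makes nonpositive.
What remains is `ψ(t)^t ln ψ(t)`, and `ln ψ(t) = -α ln(t ln t / θ(t)^{1/α})`.
-/

open Real

theorem hasDerivAt_rpow_self {f : ℝ → ℝ} {f' x : ℝ} (hf : HasDerivAt f f' x) (hx : 0 < f x) :
    HasDerivAt (fun y => f y ^ y) (f x ^ x * (log (f x) + x * f' / f x)) x := by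
  refine (hf.rpow (hasDerivAt_id x) hx).congr_deriv ?_
  rw [id, rpow_sub_one hx.ne']
  field_simp
  ring

theorem hasDerivAt_mul_log_rpow (p : ℝ) {t : ℝ} (ht : 1 < t) :
    HasDerivAt (fun x => (x * log x) ^ p) ((t * log t) ^ p * (p * (1 + log t) / (t * log t))) t := by
  have ht0 : t ≠ 0 := by linarith
  have hpos : 0 < t * log t := mul_pos (by linarith) (log_pos ht)
  have hmul : HasDerivAt (fun x => x * log x) (log t + 1) t := by
    refine ((hasDerivAt_id' t).mul (hasDerivAt_log ht0)).congr_deriv ?_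
    field_simp
  refine (hmul.rpow_const (Or.inl hpos.ne')).congr_deriv ?_
  rw [rpow_sub_one hpos.ne']
  ring

noncomputable def psi (α : ℝ) (θ : ℝ → ℝ) (t : ℝ) : ℝ := θ t * (t * log t) ^ (-α)

theorem psi_pos {α : ℝ} {θ : ℝ → ℝ} {t : ℝ} (hθ : 0 < θ t) (ht : 1 < t) : 0 < psi α θ t :=
  mul_pos hθ (rpow_pos_of_pos (mul_pos (by linarith) (log_pos ht)) _)

theorem hasDerivAt_psi {α : ℝ} {θ : ℝ → ℝ} {θ' t : ℝ} (hθ : HasDerivAt θ θ' t) (hθt : 0 < θ t)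
    (ht : 1 < t) :
    HasDerivAt (psi α θ) (psi α θ t * (θ' / θ t - α * (1 + log t) / (t * log t))) t := by
  refine (hθ.mul (hasDerivAt_mul_log_rpow (-α) ht)).congr_deriv ?_
  rw [psi]
  field_simp
  ring

theorem log_psi {α : ℝ} (hα : α ≠ 0) {θ : ℝ → ℝ} {t : ℝ} (hθ : 0 < θ t) (ht : 1 < t) :
    log (psi α θ t) = -α * log (t * log t / θ t ^ (1 / α)) := by
  have hpos : 0 < t * log t := mul_pos (by linarith) (log_pos ht)
  rw [psi, log_mul hθ.ne' (rpow_pos_of_pos hpos _).ne', log_rpow hpos,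
    log_div hpos.ne' (rpow_pos_of_pos hθ _).ne', log_rpow hθ]
  field_simp
  ring

theorem stmt_7_general (α : ℝ) (hα : 0 < α) (θ θ' : ℝ → ℝ)
    (hθpos : ∀ t, 0 < θ t)
    (hθderiv : ∀ t, HasDerivAt θ (θ' t) t)
    (hineq : ∃ T : ℝ, ∀ lam ≥ T,
      (lam - 1) * θ' (lam - 1) / (α * θ (lam - 1)) ≤
        (1 + Real.log (lam - 1)) / Real.log (lam - 1)) :
    ∃ L : ℝ, ∀ lam ≥ L, ∃ D : ℝ,
      HasDerivAt (fun s : ℝ => (θ (s - 1) * ((s - 1) * Real.log (s - 1)) ^ (-α)) ^ (s - 1))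
        D lam ∧
      D ≤ -α * (θ (lam - 1) * ((lam - 1) * Real.log (lam - 1)) ^ (-α)) ^ (lam - 1) *
            Real.log ((lam - 1) * Real.log (lam - 1) / θ (lam - 1) ^ (1/α)) := by
  obtain ⟨T, hT⟩ := hineq
  refine ⟨max T 3, fun lam hlam => ?_⟩
  set t := lam - 1
  have ht : 1 < t := by linarith [le_max_right T 3]
  have hψ := psi_pos (α := α) (hθpos t) ht
  have hψ' := hasDerivAt_psi (α := α) (hθderiv t) (hθpos t) ht
  refine ⟨_, (hasDerivAt_rpow_self hψ' hψ).comp_sub_const lam 1, ?_⟩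
  have hslope : t * (θ' t / θ t - α * (1 + log t) / (t * log t)) ≤ 0 := by
    have h : t * θ' t / (α * θ t) ≤ (1 + log t) / log t := hT lam (le_of_max_le_left hlam)
    have hθt := hθpos t
    have : t * (θ' t / θ t - α * (1 + log t) / (t * log t))
        = α * (t * θ' t / (α * θ t) - (1 + log t) / log t) := by
      field_simp
    rw [this]
    exact mul_nonpos_of_nonneg_of_nonpos hα.le (sub_nonpos.mpr h)
  calc _ = psi α θ t ^ t * (log (psi α θ t) + t * (θ' t / θ t - α * (1 + log t) / (t * log t))) := by
        rw [mul_div_assoc, mul_div_cancel_left₀ _ hψ.ne']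
    _ ≤ psi α θ t ^ t * log (psi α θ t) := by
        gcongr
        linarith
    _ = _ := by
        rw [log_psi hα.ne' (hθpos t) ht, psi]
        ring

/-- Derivative estimate for `λ ↦ ψ(λ-1)^{λ-1}`, where `ψ(λ) = θ(λ)(λ ln λ)^{-α}`:
for all sufficiently large `λ`,
`(ψ(λ-1)^{λ-1})' ≤ -α ψ(λ-1)^{λ-1} ln((λ-1)ln(λ-1)/θ^{1/α}(λ-1))`. -/
theorem stmt_7 (α : ℝ) (hα : 0 < α) (θ θ' : ℝ → ℝ)
    (hθpos : ∀ t, 0 < θ t)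
    (hθderiv : ∀ t, HasDerivAt θ (θ' t) t)
    (hθbdd : ∃ T : ℝ, ∀ lam ≥ T, θ lam ≤ Real.log lam ^ α)
    (hineq : ∃ T : ℝ, ∀ lam ≥ T,
      (lam - 1) * θ' (lam - 1) / (α * θ (lam - 1)) ≤
        (1 + Real.log (lam - 1)) / Real.log (lam - 1)) :
    ∃ L : ℝ, ∀ lam ≥ L, ∃ D : ℝ,
      HasDerivAt (fun s : ℝ => (θ (s - 1) * ((s - 1) * Real.log (s - 1)) ^ (-α)) ^ (s - 1))
        D lam ∧
      D ≤ -α * (θ (lam - 1) * ((lam - 1) * Real.log (lam - 1)) ^ (-α)) ^ (lam - 1) *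
            Real.log ((lam - 1) * Real.log (lam - 1) / θ (lam - 1) ^ (1/α)) :=
  stmt_7_general α hα θ θ' hθpos hθderiv hineq
end

section
/- For fixed a > 0 and b ∈ ℝ, set k = exp(b/a) and Λ(r) = 1 + a ln ln(1/r)/ln(1/r) + b/ln(1/r) for small r > 0. Then for x > 0 small, the solution r of Λ(r) - 1 = x is given by r = (x/(ak))^{a/x} (−W_m(−x/(ak)))^{−a/x}, where W_m is the lower real branch of the Lambert W function on (−1/e, 0). -/
open Real Set

/-!
Write `y = x / (a k)` and `t = -W_m(-y) ≥ 1`, so that `t e^{-t} = y`. Then `r = e^{-L}` with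
`L = a t / x`, and taking logarithms in `t e^{-t} = y` gives `ln L = t - b/a`; hence
`a ln L + b = a t = x L`, which is the equation `Λ(r) - 1 = x`.
-/

lemma neg_div_mem_Ioo_neg_inv_exp_one {c x : ℝ} (hc : 0 < c) (hx : x ∈ Ioo 0 (c / exp 1)) :
    -(x / c) ∈ Ioo (-(exp 1)⁻¹) 0 := by
  obtain ⟨hx0, hxc⟩ := hx
  have hlt : x / c < (exp 1)⁻¹ := by
    rwa [div_lt_iff₀ hc, inv_mul_eq_div, lt_div_iff₀ (exp_pos 1), ← lt_div_iff₀ (exp_pos 1)]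
  constructor <;> linarith [div_pos hx0 hc]

lemma mul_exp_neg_rpow_mul_rpow_neg {t : ℝ} (ht : 0 < t) (p : ℝ) :
    (t * exp (-t)) ^ p * t ^ (-p) = exp (-(t * p)) := by
  rw [mul_rpow ht.le (exp_pos _).le, rpow_neg ht.le, mul_right_comm,
    mul_inv_cancel₀ (rpow_pos_of_pos ht p).ne', one_mul, ← exp_mul, neg_mul]

lemma log_mul_div_of_mul_exp_neg_eq {a b x t : ℝ} (ha : 0 < a) (hx : 0 < x)
    (ht : t * exp (-t) = x / (a * exp (b / a))) :
    log (t * (a / x)) = t - b / a := by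
  suffices t * (a / x) = exp (t - b / a) by rw [this, log_exp]
  rw [exp_sub, eq_div_iff (exp_pos _).ne']
  rw [exp_neg] at ht
  field_simp at ht ⊢
  linarith

lemma log_log_div_add_div_eq {a b x t : ℝ} (ha : 0 < a) (hx : 0 < x) (ht : 0 < t)
    (hlog : log (t * (a / x)) = t - b / a) :
    a * log (log (1 / exp (-(t * (a / x))))) / log (1 / exp (-(t * (a / x)))) +
      b / log (1 / exp (-(t * (a / x)))) = x := by
  rw [one_div, ← exp_neg, neg_neg, log_exp, hlog]
  field_simp
  ring

/-- For `Λ(r) = 1 + a ln ln(1/r)/ln(1/r) + b/ln(1/r)` and small `x > 0`, the solution of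
`Λ(r) - 1 = x` is `r = (x/(ak))^{a/x} (−W_m(−x/(ak)))^{−a/x}` with `k = e^{b/a}`, where
`W_m` is the lower real branch of the Lambert `W` function. -/
theorem stmt_14 (Wm : ℝ → ℝ)
    (hWm : ∀ y ∈ Ioo (-(Real.exp 1)⁻¹) (0:ℝ),
      Wm y ≤ -1 ∧ Wm y * Real.exp (Wm y) = y)
    (a b : ℝ) (ha : 0 < a) :
    ∃ x₁ > (0:ℝ), ∀ x ∈ Ioo (0:ℝ) x₁,
      letI k : ℝ := Real.exp (b / a)
      letI r : ℝ := (x / (a * k)) ^ (a / x) * (-(Wm (-(x / (a * k))))) ^ (-(a / x))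
      0 < r ∧ r < 1 ∧
        a * Real.log (Real.log (1 / r)) / Real.log (1 / r) + b / Real.log (1 / r) = x := by
  have hak : 0 < a * exp (b / a) := by positivity
  refine ⟨a * exp (b / a) / exp 1, by positivity, fun x hx => ?_⟩
  obtain ⟨hW, hWexp⟩ := hWm _ (neg_div_mem_Ioo_neg_inv_exp_one hak hx)
  set t := -Wm (-(x / (a * exp (b / a)))) with ht_def
  have ht : 0 < t := by linarith
  have htexp : t * exp (-t) = x / (a * exp (b / a)) := by
    rw [ht_def, neg_neg]; linarith
  have hL : 0 < t * (a / x) := mul_pos ht (div_pos ha hx.1)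
  rw [← htexp, mul_exp_neg_rpow_mul_rpow_neg ht]
  exact ⟨exp_pos _, exp_lt_one_iff.mpr (neg_lt_zero.mpr hL),
    log_log_div_add_div_eq ha hx.1 ht (log_mul_div_of_mul_exp_neg_eq ha hx.1 htexp)⟩
end

section
/- Fix α > 0. For sufficiently small x₀ > 0 define p(x) = 1 + ln(ln(1/x^{1/α}))/ln(1/x^{1/α}) for 0 < x < x₀. Then there exist C > 0 and λ₀ > 0 such that for all 0 < λ ≤ λ₀, |{x ∈ (0,x₀) : p(x) ≤ 1+λ}| ≤ C λ^{α/λ} (ln(1/λ))^{-α/λ}; consequently L^{p(·)}((0,x₀)) ⊂ L(log L)^α((0,x₀)). -/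
/-!
With `u = ln (1/x^{1/α})` we have `x = e^{-αu}` and `p(x) = 1 + ln u / u`.
If `p(x) ≤ 1 + λ`, then `ln u ≤ λ u` forces `u > 1/λ`, hence `u ≥ ln(1/λ)/λ`,
hence `λ u ≥ ln u ≥ ln(1/λ) + ln ln(1/λ)`; exponentiating `x = e^{-αu}` gives the bound on
the distribution function (with `C = 1`).

For the embedding, split `g ln(e+g)^α` at the threshold `g = e^{αu} / u^{α+2}`. Below it, the
term is at most its value at the threshold, which is `(2α)^α α² / (x ln² x)`, integrable near
`0`. Above it, `ln(e+g)^α ≤ C g^{ln u / u}`. So `g ln(e+g)^α ≤ C g^{p(x)} + C' / (x ln² x)`,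
and a finite `L^{p(·)}` modular of `f/t` gives a finite `L log^α L` modular of `f/t`, which a
further dilation brings below `1`.
-/

open MeasureTheory Real Set Filter
open scoped ENNReal

/-- Luxemburg norm of the variable Lebesgue space `L^{p(·)}(Ω)` (finite exponent). -/
noncomputable def luxNorm {E : Type*} [MeasureSpace E] (Ω : Set E) (p : E → ℝ) (f : E → ℝ) :
    ℝ≥0∞ :=
  ⨅ (t : ℝ) (_ : 0 < t)
    (_ : ∫⁻ x in Ω, ENNReal.ofReal ((|f x| / t) ^ p x) ≤ 1),
    ENNReal.ofReal t

open scoped Topology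

theorem iInf_ofReal_ne_top_iff {Q : ℝ → Prop} :
    (⨅ (t : ℝ) (_ : 0 < t) (_ : Q t), ENNReal.ofReal t) ≠ ∞ ↔ ∃ t, 0 < t ∧ Q t := by
  simp [iInf_eq_top]

theorem orliczNorm_ne_top_of_lintegral_ne_top {E : Type*} [MeasureSpace E] {Ω : Set E}
    {M : ℝ → ℝ} (hM : ∀ θ ∈ Icc (0:ℝ) 1, ∀ s, 0 ≤ s → M (θ * s) ≤ θ * M s)
    {f : E → ℝ} {t : ℝ} (ht : 0 < t)
    (hf : ∫⁻ x in Ω, ENNReal.ofReal (M (|f x| / t)) ≠ ∞) : orliczNorm Ω M f ≠ ∞ := by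
  set J := ∫⁻ x in Ω, ENNReal.ofReal (M (|f x| / t))
  have hJ : 0 ≤ J.toReal := ENNReal.toReal_nonneg
  set θ := (1 + J.toReal)⁻¹
  have hθ : θ ∈ Icc (0:ℝ) 1 := ⟨by positivity, inv_le_one_of_one_le₀ (by linarith)⟩
  refine iInf_ofReal_ne_top_iff.2 ⟨t * (1 + J.toReal), by positivity, ?_⟩
  calc ∫⁻ x in Ω, ENNReal.ofReal (M (|f x| / (t * (1 + J.toReal))))
      ≤ ∫⁻ x in Ω, ENNReal.ofReal θ * ENNReal.ofReal (M (|f x| / t)) := by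
        refine lintegral_mono fun x => ?_
        rw [← ENNReal.ofReal_mul hθ.1, show |f x| / (t * (1 + J.toReal)) = θ * (|f x| / t) by
          simp only [θ]; field_simp]
        exact ENNReal.ofReal_le_ofReal (hM θ hθ _ (by positivity))
    _ = ENNReal.ofReal (θ * J.toReal) := by
        rw [lintegral_const_mul' _ _ ENNReal.ofReal_ne_top, ENNReal.ofReal_mul hθ.1,
          ENNReal.ofReal_toReal hf]
    _ ≤ 1 := ENNReal.ofReal_le_one.2 <| by
        rw [← div_eq_inv_mul, div_le_one (by positivity)]; linarith

theorem mul_log_exp_one_add_rpow_scaling {α : ℝ} (hα : 0 ≤ α) :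
    ∀ θ ∈ Icc (0:ℝ) 1, ∀ s, 0 ≤ s →
      θ * s * log (exp 1 + θ * s) ^ α ≤ θ * (s * log (exp 1 + s) ^ α) := by
  rintro θ ⟨hθ0, hθ1⟩ s hs
  have hθs : θ * s ≤ s := mul_le_of_le_one_left hs hθ1
  have he : 0 < exp 1 := exp_pos 1
  rw [← mul_assoc]
  gcongr
  exact log_nonneg (by linarith [add_one_le_exp (1:ℝ), mul_nonneg hθ0 hs])

theorem hasDerivAt_neg_inv_log {x : ℝ} (hx : 0 < x) (hx1 : x < 1) :
    HasDerivAt (fun y => -(log y)⁻¹) (x * log x ^ 2)⁻¹ x := by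
  have hlog : log x ≠ 0 := (log_neg hx hx1).ne
  refine ((hasDerivAt_log hx.ne').inv hlog).neg.congr_deriv ?_
  field_simp

-- Continuity at `0` itself relies on the junk values `log 0 = 0` and `0⁻¹ = 0`.
theorem continuousAt_inv_log_zero : ContinuousAt (fun y => (log y)⁻¹) 0 := by
  rw [← continuousWithinAt_compl_self, ContinuousWithinAt, log_zero, inv_zero]
  exact tendsto_inv_atBot_zero.comp tendsto_log_nhdsNE_zero

theorem lintegral_inv_mul_log_sq_lt_top {a : ℝ} (ha : a < 1) :
    ∫⁻ x in Ioo 0 a, ENNReal.ofReal (x * log x ^ 2)⁻¹ < ∞ := by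
  rcases le_or_gt a 0 with ha0 | ha0
  · simp [Ioo_eq_empty_of_le ha0]
  have hcont : ContinuousOn (fun y => -(log y)⁻¹) (Icc 0 a) := by
    intro y hy
    rcases hy.1.eq_or_lt with rfl | hy0
    · exact continuousAt_inv_log_zero.neg.continuousWithinAt
    · exact (hasDerivAt_neg_inv_log hy0 (hy.2.trans_lt ha)).continuousAt.continuousWithinAt
  have hint : IntegrableOn (fun x => (x * log x ^ 2)⁻¹) (Ioc 0 a) :=
    intervalIntegral.integrableOn_deriv_of_nonneg hcont
      (fun x hx => hasDerivAt_neg_inv_log hx.1 (hx.2.trans ha))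
      (fun x hx => by have := hx.1; positivity)
  exact lt_of_le_of_lt (lintegral_mono_set Ioo_subset_Ioc_self) hint.lintegral_lt_top

theorem log_exp_one_add_le_two_mul_log {g : ℝ} (hg : exp 1 ≤ g) :
    log (exp 1 + g) ≤ 2 * log g := by
  have he : 2 ≤ exp 1 := by linarith [add_one_le_exp (1:ℝ)]
  have hg0 : 0 < g := by linarith
  rw [two_mul, ← log_mul hg0.ne' hg0.ne']
  exact log_le_log (by linarith) (by nlinarith)

theorem log_sq_le_four_mul {u : ℝ} (hu : 1 ≤ u) : log u ^ 2 ≤ 4 * u := by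
  have h := log_le_rpow_div (x := u) (by linarith) (by norm_num : (0:ℝ) < 1/2)
  rw [← sqrt_eq_rpow] at h
  have hsq : √u ^ 2 = u := sq_sqrt (by linarith)
  nlinarith [log_nonneg hu, sqrt_nonneg u]

theorem mul_log_two_mul_le {α u v : ℝ} (hα : 0 < α) (hu : 0 < u) (hL : 1 ≤ log u)
    (hv0 : 0 < v) (hv : α * u - (α + 2) * log u ≤ v) :
    α * log (2 * v) ≤ α * log (2 * α) + 4 * (α + 2) + log u / u * v := by
  have hsplit : log (2 * v) = log (2 * α) + log u + log (v / (α * u)) := by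
    rw [← log_mul (by positivity) hu.ne', ← log_mul (by positivity) (by positivity)]
    congr 1
    field_simp
  have htangent : log (v / (α * u)) ≤ v / (α * u) - 1 := log_le_sub_one_of_pos (by positivity)
  have hu1 : 1 ≤ u := (one_le_exp_iff.mpr zero_le_one).trans ((le_log_iff_exp_le hu).mp hL)
  have hkey : (log u - 1) * (α * u - v) ≤ 4 * (α + 2) * u := by
    have := mul_le_mul_of_nonneg_left (sub_le_comm.mp hv) (sub_nonneg.mpr hL)
    nlinarith [log_sq_le_four_mul hu1]
  have hdiv : (log u - 1) * (α - v / u) ≤ 4 * (α + 2) := by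
    rw [show (log u - 1) * (α - v / u) = (log u - 1) * (α * u - v) / u by field_simp,
      div_le_iff₀ hu]
    exact hkey
  rw [hsplit]
  have : α * log (v / (α * u)) ≤ v / u - α := by
    have := mul_le_mul_of_nonneg_left htangent hα.le
    rwa [mul_sub, mul_one, mul_div_assoc', mul_div_mul_left _ _ hα.ne'] at this
  linear_combination this + hdiv

theorem mul_log_exp_one_add_rpow_le {α u g : ℝ} (hα : 0 < α) (hu : 0 < u) (hL : 1 ≤ log u)
    (hv : 1 ≤ α * u - (α + 2) * log u) (hg : 0 ≤ g) :
    g * log (exp 1 + g) ^ α ≤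
      exp (α * log (2 * α) + 4 * (α + 2)) * g ^ (1 + log u / u) +
        (2 * α) ^ α * exp (α * u) / u ^ 2 := by
  set v₁ := α * u - (α + 2) * log u with hv₁
  have hlog_nonneg : 0 ≤ log (exp 1 + g) := log_nonneg (by linarith [add_one_le_exp (1:ℝ)])
  rcases le_or_gt g (exp v₁) with hsmall | hlarge
  · have hthreshold : exp v₁ * (2 * α * u) ^ α = (2 * α) ^ α * exp (α * u) / u ^ 2 := by
      have hpow : exp ((α + 2) * log u) = u ^ α * u ^ 2 := by
        rw [mul_comm, ← rpow_def_of_pos hu, rpow_add hu, rpow_two]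
      rw [hv₁, exp_sub, hpow, mul_rpow (by positivity) hu.le]
      field_simp
    have hlog : log (exp 1 + g) ≤ 2 * α * u := by
      calc log (exp 1 + g) ≤ log (2 * exp v₁) :=
            log_le_log (by positivity) (by linarith [exp_le_exp.2 hv])
        _ = log 2 + v₁ := by rw [log_mul two_ne_zero (exp_pos _).ne', log_exp]
        _ ≤ 2 * α * u := by nlinarith [log_two_lt_d9]
    calc g * log (exp 1 + g) ^ α ≤ exp v₁ * (2 * α * u) ^ α := by gcongr
      _ = (2 * α) ^ α * exp (α * u) / u ^ 2 := hthreshold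
      _ ≤ _ := le_add_of_nonneg_left (by positivity)
  · have hg0 : 0 < g := (exp_pos _).trans hlarge
    have hv₁g : v₁ ≤ log g := (lt_log_iff_exp_lt hg0).mpr hlarge |>.le
    have hlog := log_exp_one_add_le_two_mul_log ((exp_le_exp.2 (hv.trans hv₁g)).trans_eq
      (exp_log hg0))
    have hpow : log (exp 1 + g) ^ α ≤
        exp (α * log (2 * α) + 4 * (α + 2)) * g ^ (log u / u) := by
      calc log (exp 1 + g) ^ α ≤ (2 * log g) ^ α := by gcongr
        _ = exp (α * log (2 * log g)) := by
            rw [rpow_def_of_pos (by linarith), mul_comm]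
        _ ≤ exp (α * log (2 * α) + 4 * (α + 2) + log u / u * log g) :=
            exp_le_exp.2 (mul_log_two_mul_le hα hu hL (by linarith) hv₁g)
        _ = _ := by rw [exp_add, rpow_def_of_pos hg0, mul_comm (log g)]
    calc g * log (exp 1 + g) ^ α
        ≤ g * (exp (α * log (2 * α) + 4 * (α + 2)) * g ^ (log u / u)) := by gcongr
      _ = exp (α * log (2 * α) + 4 * (α + 2)) * g ^ (1 + log u / u) := by
          rw [rpow_add hg0, rpow_one]; ring
      _ ≤ _ := le_add_of_nonneg_right (by positivity)

noncomputable def logScale (α x : ℝ) : ℝ := log (1 / x ^ (1 / α))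

theorem logScale_eq {α x : ℝ} (hx : 0 < x) : logScale α x = -log x / α := by
  rw [logScale, one_div, log_inv, log_rpow hx]
  ring

theorem tendsto_logScale {α : ℝ} (hα : 0 < α) : Tendsto (logScale α) (𝓝[>] 0) atTop := by
  refine Tendsto.congr' (eventually_nhdsWithin_of_forall fun x hx => (logScale_eq hx).symm) ?_
  exact (tendsto_neg_atBot_atTop.comp tendsto_log_nhdsGT_zero).atTop_div_const hα

theorem eventually_atTop_log_lt_and_le {α : ℝ} (hα : 0 < α) :
    ∀ᶠ u in atTop, 0 < u ∧ 1 < log u ∧ 1 ≤ α * u - (α + 2) * log u := by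
  have hsmall := isLittleO_log_id_atTop.bound (c := α / (2 * (α + 2))) (by positivity)
  filter_upwards [hsmall, eventually_gt_atTop 0, tendsto_log_atTop.eventually_gt_atTop 1,
    eventually_ge_atTop (2 / α)] with u hlog hu hL hu2
  refine ⟨hu, hL, ?_⟩
  rw [norm_of_nonneg (by linarith), id, norm_of_nonneg hu.le] at hlog
  have h1 : (α + 2) * log u ≤ α * u / 2 := by
    calc (α + 2) * log u ≤ (α + 2) * (α / (2 * (α + 2)) * u) := by gcongr
      _ = α * u / 2 := by field_simp
  have h2 : 2 ≤ α * u := by rwa [div_le_iff₀' hα] at hu2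
  linarith

theorem log_inv_add_log_log_inv_le_mul {l u : ℝ} (hl0 : 0 < l) (hl1 : l < 1) (hu : 0 < u)
    (hL : 1 < log u) (h : log u / u ≤ l) : log (1 / l) + log (log (1 / l)) ≤ l * u := by
  have hLu : log u ≤ l * u := by rw [div_le_iff₀ hu] at h; linarith
  have hinv : 1 / l < u := by
    by_contra! hle
    have := mul_le_mul_of_nonneg_left hle hl0.le
    rw [mul_one_div_cancel hl0.ne'] at this
    linarith
  have hlogl : 0 < log (1 / l) := log_pos (by rw [lt_div_iff₀ hl0]; linarith)
  have h1 : log (1 / l) / l ≤ u := by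
    rw [div_le_iff₀ hl0, mul_comm]
    exact (log_le_log (by positivity) hinv.le).trans hLu
  calc log (1 / l) + log (log (1 / l)) = log (log (1 / l) / l) := by
        rw [log_div hlogl.ne' hl0.ne', one_div, log_inv]; ring
    _ ≤ log u := log_le_log (by positivity) h1
    _ ≤ l * u := hLu

theorem le_rpow_mul_log_rpow_of_log_logScale_div_le {α x l : ℝ} (hα : 0 < α) (hx : 0 < x)
    (hl0 : 0 < l) (hl1 : l < 1) (hu : 0 < logScale α x) (hL : 1 < log (logScale α x))
    (h : log (logScale α x) / logScale α x ≤ l) :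
    x ≤ l ^ (α / l) * log (1 / l) ^ (-(α / l)) := by
  have hlogl : 0 < log (1 / l) := log_pos (by rw [lt_div_iff₀ hl0]; linarith)
  have hkey := log_inv_add_log_log_inv_le_mul hl0 hl1 hu hL h
  rw [logScale_eq hx] at hkey
  rw [rpow_def_of_pos hl0, rpow_def_of_pos hlogl, ← exp_add, ← exp_log hx]
  refine exp_le_exp.2 ?_
  calc log x = -(α / l * (l * (-log x / α))) := by field_simp
    _ ≤ -(α / l * (log (1 / l) + log (log (1 / l)))) :=
        neg_le_neg (mul_le_mul_of_nonneg_left hkey (by positivity))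
    _ = log l * (α / l) + log (log (1 / l)) * -(α / l) := by rw [one_div l, log_inv]; ring

theorem mul_log_exp_one_add_rpow_le_of_logScale {α x g : ℝ} (hα : 0 < α) (hx : 0 < x)
    (hu : 0 < logScale α x) (hL : 1 ≤ log (logScale α x))
    (hv : 1 ≤ α * logScale α x - (α + 2) * log (logScale α x)) (hg : 0 ≤ g) :
    g * log (exp 1 + g) ^ α ≤
      exp (α * log (2 * α) + 4 * (α + 2)) * g ^ (1 + log (logScale α x) / logScale α x) +
        (2 * α) ^ α * α ^ 2 * (x * log x ^ 2)⁻¹ := by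
  convert mul_log_exp_one_add_rpow_le hα hu hL hv hg using 2
  have hexp : exp (α * logScale α x) = x⁻¹ := by
    rw [logScale_eq hx, mul_div_cancel₀ _ hα.ne', exp_neg, exp_log hx]
  rw [hexp, logScale_eq hx]
  field_simp

theorem lintegral_mul_log_exp_one_add_rpow_ne_top {α x₀ : ℝ} {g : ℝ → ℝ} (hα : 0 < α)
    (hx₀ : x₀ < 1)
    (hgood : ∀ x ∈ Ioo 0 x₀, 0 < logScale α x ∧ 1 < log (logScale α x) ∧
      1 ≤ α * logScale α x - (α + 2) * log (logScale α x))
    (hg : ∀ x, 0 ≤ g x)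
    (hmod : ∫⁻ x in Ioo 0 x₀,
      ENNReal.ofReal (g x ^ (1 + log (logScale α x) / logScale α x)) ≠ ∞) :
    ∫⁻ x in Ioo 0 x₀, ENNReal.ofReal (g x * log (exp 1 + g x) ^ α) ≠ ∞ := by
  set C := exp (α * log (2 * α) + 4 * (α + 2))
  set D := (2 * α) ^ α * α ^ 2
  have hpt : ∀ x ∈ Ioo 0 x₀, ENNReal.ofReal (g x * log (exp 1 + g x) ^ α) ≤
      ENNReal.ofReal C * ENNReal.ofReal (g x ^ (1 + log (logScale α x) / logScale α x)) +
        ENNReal.ofReal D * ENNReal.ofReal (x * log x ^ 2)⁻¹ := by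
    intro x hx
    obtain ⟨hu, hL, hv⟩ := hgood x hx
    have hx0 := hx.1
    have hgx := hg x
    rw [← ENNReal.ofReal_mul (by positivity), ← ENNReal.ofReal_mul (by positivity),
      ← ENNReal.ofReal_add (by positivity) (by positivity)]
    exact ENNReal.ofReal_le_ofReal
      (mul_log_exp_one_add_rpow_le_of_logScale hα hx0 hu hL.le hv hgx)
  refine ne_top_of_le_ne_top ?_ (setLIntegral_mono' measurableSet_Ioo hpt)
  rw [lintegral_add_right _ (by fun_prop), lintegral_const_mul' _ _ ENNReal.ofReal_ne_top,
    lintegral_const_mul' _ _ ENNReal.ofReal_ne_top]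
  exact ENNReal.add_ne_top.2 ⟨ENNReal.mul_ne_top ENNReal.ofReal_ne_top hmod,
    ENNReal.mul_ne_top ENNReal.ofReal_ne_top (lintegral_inv_mul_log_sq_lt_top hx₀).ne⟩

/-- (Example 2.) For `p(x) = 1 + ln(ln(1/x^{1/α}))/ln(1/x^{1/α})` on `(0,x₀)` with `x₀`
small, the distribution function satisfies
`|{x : p(x) ≤ 1+λ}| ≤ C λ^{α/λ}(ln(1/λ))^{-α/λ}`, and hence
`L^{p(·)}((0,x₀)) ⊂ L(log L)^α((0,x₀))`. -/
theorem stmt_18 (α : ℝ) (hα : 0 < α) :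
    ∃ x₁ ∈ Ioo (0:ℝ) 1, ∀ x₀ ∈ Ioo (0:ℝ) x₁, ∃ C > (0:ℝ), ∃ lam0 > (0:ℝ),
      (∀ l ∈ Ioc (0:ℝ) lam0,
        volume {x ∈ Ioo (0:ℝ) x₀ |
            1 + Real.log (Real.log (1 / x ^ (1/α))) / Real.log (1 / x ^ (1/α)) ≤ 1 + l} ≤
          ENNReal.ofReal (C * l ^ (α/l) * Real.log (1/l) ^ (-(α/l)))) ∧
      (∀ f : ℝ → ℝ, Measurable f →
        luxNorm (Ioo (0:ℝ) x₀)
            (fun x => 1 + Real.log (Real.log (1 / x ^ (1/α))) / Real.log (1 / x ^ (1/α))) f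
          ≠ ∞ →
        orliczNorm (Ioo (0:ℝ) x₀) (fun t => t * Real.log (Real.exp 1 + t) ^ α) f ≠ ∞) := by
  obtain ⟨x₁, hx₁, hgood⟩ := (nhdsGT_basis (0:ℝ)).eventually_iff.mp
    ((tendsto_logScale hα).eventually (eventually_atTop_log_lt_and_le hα))
  refine ⟨min x₁ (1 / 2), ⟨lt_min hx₁ (by norm_num), (min_le_right _ _).trans_lt (by norm_num)⟩,
    fun x₀ hx₀ => ?_⟩
  have hx₀1 : x₀ < 1 := hx₀.2.trans_le (min_le_right _ _) |>.trans (by norm_num)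
  have hgood₀ : ∀ x ∈ Ioo 0 x₀, 0 < logScale α x ∧ 1 < log (logScale α x) ∧
      1 ≤ α * logScale α x - (α + 2) * log (logScale α x) := fun x hx =>
    hgood ⟨hx.1, hx.2.trans (hx₀.2.trans_le (min_le_left _ _))⟩
  refine ⟨1, one_pos, 1 / 2, by norm_num, ?_, ?_⟩
  · rintro l ⟨hl0, hl⟩
    rw [one_mul]
    refine (measure_mono ?_).trans_eq (volume_Ioc.trans (by rw [sub_zero]))
    rintro x ⟨hx, hp⟩
    obtain ⟨hu, hL, -⟩ := hgood₀ x hx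
    exact ⟨hx.1, le_rpow_mul_log_rpow_of_log_logScale_div_le hα hx.1 hl0 (by linarith) hu hL
      ((add_le_add_iff_left 1).mp hp)⟩
  · intro f _ hlux
    obtain ⟨t, ht, hmod⟩ := iInf_ofReal_ne_top_iff.1 hlux
    exact orliczNorm_ne_top_of_lintegral_ne_top (mul_log_exp_one_add_rpow_scaling hα.le) ht
      (lintegral_mul_log_exp_one_add_rpow_ne_top hα hx₀1 hgood₀ (fun x => by positivity)
        (ne_top_of_le_ne_top ENNReal.one_ne_top hmod))
end

section
/- Fix α > 0. Define p₀(x) = α W_p((1/α) ln(1/x)) / ln(1/x) for 0 < x ≤ x₀ (x₀ small), where W_p is the principal branch of the Lambert W function. Then for 0 < λ ≤ λ₀, |{x ∈ (0,x₀] : 1 + p₀(x) ≤ 1+λ}| = λ^{α/λ}, i.e., p₀ is the inverse of λ ↦ λ^{α/λ} on (0, λ₀]. -/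
/-!
Put `L = log (1/x) > 0` and `y = L / α`. Since `t ↦ t eᵗ` is strictly increasing on `[0, ∞)`,
`W(y) ≤ λ y` holds iff `y ≤ λ y e^{λ y}`, i.e. iff `1 ≤ λ e^{λ y}`, i.e. iff
`(α / λ) log (1/λ) ≤ L`, which says exactly `x ≤ λ^{α/λ}`. So the sublevel set is the interval
`(0, λ^{α/λ}]` as soon as `λ^{α/λ} ≤ x₀`, which holds for small `λ`.
-/

open MeasureTheory Real Set
open scoped ENNReal

lemma strictMonoOn_mul_exp : StrictMonoOn (fun t : ℝ => t * exp t) (Ici 0) :=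
  fun _ _ _ hb hab => mul_lt_mul hab (exp_le_exp.2 hab.le) (exp_pos _) hb

lemma le_iff_le_mul_exp_of_mul_exp_eq {w y t : ℝ} (hw : w * exp w = y) (hy : 0 ≤ y)
    (ht : 0 ≤ t) : w ≤ t ↔ y ≤ t * exp t := by
  have hw0 : 0 ≤ w := (mul_nonneg_iff_of_pos_right (exp_pos w)).1 (hw ▸ hy)
  rw [← hw]
  exact (strictMonoOn_mul_exp.le_iff_le hw0 ht).symm

lemma le_mul_iff_neg_log_le_of_mul_exp_eq {w y l : ℝ} (hw : w * exp w = y) (hy : 0 < y)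
    (hl : 0 < l) : w ≤ l * y ↔ -log l ≤ l * y := by
  rw [le_iff_le_mul_exp_of_mul_exp_eq hw hy.le (by positivity), neg_le, le_log_iff_exp_le hl,
    exp_neg, inv_le_iff_one_le_mul₀ (exp_pos _), mul_comm l y, mul_assoc]
  exact le_mul_iff_one_le_right hy

lemma lambertW_div_log_le_iff {α l x w : ℝ} (hα : 0 < α) (hl : 0 < l) (hx0 : 0 < x)
    (hx1 : x < 1) (hw : w * exp w = (1 / α) * log (1 / x)) :
    α * w / log (1 / x) ≤ l ↔ x ≤ l ^ (α / l) := by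
  have hL : log (1 / x) = -log x := by rw [one_div, log_inv]
  have hL0 : 0 < log (1 / x) := hL ▸ neg_pos.2 (log_neg hx0 hx1)
  rw [div_le_iff₀ hL0, ← le_div_iff₀' hα, mul_div_assoc, ← mul_one_div, mul_comm _ (1 / α),
    le_mul_iff_neg_log_le_of_mul_exp_eq hw (by positivity) hl, ← log_le_log_iff hx0
    (by positivity), log_rpow hl, hL, show l * (1 / α * -log x) = -(l * log x) / α by ring, le_div_iff₀ hα, neg_mul,
    neg_le_neg_iff, div_mul_eq_mul_div, le_div_iff₀' hl, mul_comm l, mul_comm α]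

lemma rpow_div_self_le {α l c : ℝ} (hα : 0 < α) (hl0 : 0 < l) (hl1 : l ≤ 1) (hc : 0 ≤ c)
    (hlc : l ≤ c ^ α⁻¹) : l ^ (α / l) ≤ c :=
  calc l ^ (α / l) ≤ l ^ α := rpow_le_rpow_of_exponent_ge hl0 hl1 (le_div_self hα.le hl0 hl1)
    _ ≤ (c ^ α⁻¹) ^ α := rpow_le_rpow hl0.le hlc hα.le
    _ = c := rpow_inv_rpow hc hα.ne'

/-- (Example, `ε = 0` case.) For `p₀(x) = α W_p((1/α)ln(1/x))/ln(1/x)` with `W_p` the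
principal branch of the Lambert `W` function, one has
`|{x ∈ (0,x₀] : 1 + p₀(x) ≤ 1 + λ}| = λ^{α/λ}` for all small `λ > 0`. -/
theorem stmt_19 (α : ℝ) (hα : 0 < α) (Wp : ℝ → ℝ)
    (hWp : ∀ y ≥ (0:ℝ), -1 ≤ Wp y ∧ Wp y * Real.exp (Wp y) = y) :
    ∃ x₀ ∈ Ioo (0:ℝ) 1, ∃ lam0 > (0:ℝ), ∀ l ∈ Ioc (0:ℝ) lam0,
      volume {x ∈ Ioc (0:ℝ) x₀ |
          1 + α * Wp ((1/α) * Real.log (1/x)) / Real.log (1/x) ≤ 1 + l} =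
        ENNReal.ofReal (l ^ (α / l)) := by
  refine ⟨1 / 2, ⟨by norm_num, by norm_num⟩, min 1 ((1 / 2) ^ α⁻¹),
    lt_min one_pos (by positivity), ?_⟩
  rintro l ⟨hl0, hl⟩
  have hm : l ^ (α / l) ≤ 1 / 2 :=
    rpow_div_self_le hα hl0 (hl.trans (min_le_left _ _)) (by norm_num)
      (hl.trans (min_le_right _ _))
  have hcond : ∀ x ∈ Ioc (0:ℝ) (1 / 2),
      α * Wp ((1/α) * Real.log (1/x)) / Real.log (1/x) ≤ l ↔ x ≤ l ^ (α / l) := by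
    rintro x ⟨hx0, hx⟩
    have hx1 : x < 1 := by linarith
    have hy : 0 ≤ (1 / α) * log (1 / x) :=
      mul_nonneg (by positivity) (log_nonneg (one_le_one_div hx0 hx1.le))
    exact lambertW_div_log_le_iff hα hl0 hx0 hx1 (hWp _ hy).2
  have hsub : {x ∈ Ioc (0:ℝ) (1 / 2) |
      1 + α * Wp ((1/α) * Real.log (1/x)) / Real.log (1/x) ≤ 1 + l} = Ioc 0 (l ^ (α / l)) := by
    ext x
    constructor
    · rintro ⟨hx, h⟩
      exact ⟨hx.1, (hcond x hx).1 (by linarith)⟩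
    · rintro ⟨hx0, hx⟩
      have hx' : x ∈ Ioc (0:ℝ) (1 / 2) := ⟨hx0, hx.trans hm⟩
      exact ⟨hx', by linarith [(hcond x hx').2 hx]⟩
  rw [hsub, volume_Ioc, sub_zero]
end
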